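/- Let φ : (a,∞) → ℝ be C¹ and strictly increasing with φ(s) → ∞ as s → ∞, with e^{−φ} integrable on (a,∞), and suppose φ' is nondecreasing. For λ ∈ (a,∞), let Λ_λ < ∞ be the half-length of the maximal interval of the solution of u'' = φ'(u)(1+(u')²), u(0)=λ, u'(0)=0. Then λ ↦ Λ_λ is nonincreasing. -/

import Mathlib

/-!
Along a solution starting at rest at height `λ`, the quantity `(1 + u'²) e^{-2φ(u)}` is
conserved, so `u' = √(e^{2(φ(u) - φ(λ))} - 1)` on `[0, Λ)` and the time needed to climb from
`λ` to height `y` is `T_λ(y) = ∫_λ^y dμ / √(e^{2(φ(μ) - φ(λ))} - 1)`. Hence every solution has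
`Λ ≤ Λ_λ := T_λ(∞)`, which is finite by convexity near `λ` and by the integrability of `e^{-φ}`
at infinity. Conversely, inverting `T_λ` on `[0, Λ_λ)` and extending evenly gives a solution on
`(-Λ_λ, Λ_λ)`, so a maximal solution lives exactly on `(-Λ_λ, Λ_λ)`. Finally, after the
substitution `μ = λ + t`, convexity makes `φ(λ + t) - φ(λ)` nondecreasing in `λ`, so the
integrand, and with it `Λ_λ`, is nonincreasing in `λ`.
-/

open Set Filter Real MeasureTheory Topology

noncomputable section

def firstIntegralSlope (r : ℝ) : ℝ := √(exp (2 * r) - 1)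

lemma firstIntegralSlope_nonneg (r : ℝ) : 0 ≤ firstIntegralSlope r := sqrt_nonneg _

@[simp] lemma firstIntegralSlope_zero : firstIntegralSlope 0 = 0 := by simp [firstIntegralSlope]

lemma firstIntegralSlope_pos {r : ℝ} (hr : 0 < r) : 0 < firstIntegralSlope r :=
  sqrt_pos.2 <| sub_pos.2 <| one_lt_exp_iff.2 (by positivity)

lemma sq_firstIntegralSlope {r : ℝ} (hr : 0 ≤ r) : firstIntegralSlope r ^ 2 = exp (2 * r) - 1 :=
  sq_sqrt <| sub_nonneg.2 <| one_le_exp (by positivity)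

lemma continuous_firstIntegralSlope : Continuous firstIntegralSlope := by
  unfold firstIntegralSlope; fun_prop

lemma monotone_firstIntegralSlope : Monotone firstIntegralSlope := fun r s hrs =>
  sqrt_le_sqrt <| by gcongr

lemma hasDerivAt_firstIntegralSlope {r : ℝ} (hr : 0 < r) :
    HasDerivAt firstIntegralSlope (exp (2 * r) / firstIntegralSlope r) r := by
  have hne : exp (2 * r) - 1 ≠ 0 := (sub_pos.2 (one_lt_exp_iff.2 (by positivity))).ne'
  refine ((((hasDerivAt_id r).const_mul 2).exp.sub_const 1).sqrt hne).congr_deriv ?_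
  simp only [firstIntegralSlope, id]
  ring

lemma sqrt_two_mul_le_firstIntegralSlope (r : ℝ) : √(2 * r) ≤ firstIntegralSlope r :=
  sqrt_le_sqrt <| by linarith [add_one_le_exp (2 * r)]

lemma exp_div_two_le_firstIntegralSlope {r : ℝ} (hr : 1 ≤ r) :
    exp r / 2 ≤ firstIntegralSlope r := by
  have he : 2 ≤ exp r := by linarith [add_one_le_exp r]
  have h2 : exp (2 * r) = exp r ^ 2 := by rw [← exp_nat_mul]; norm_num
  rw [firstIntegralSlope, h2, le_sqrt (by positivity) (by nlinarith)]
  nlinarith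

section Potential

variable {a : ℝ} {φ φ' : ℝ → ℝ}

lemma strictMonoOn_of_hasDerivAt_pos_Ioi (hφ : ∀ s ∈ Ioi a, HasDerivAt φ (φ' s) s)
    (hφpos : ∀ s ∈ Ioi a, 0 < φ' s) : StrictMonoOn φ (Ioi a) :=
  strictMonoOn_of_hasDerivWithinAt_pos (convex_Ioi a)
    (fun s hs => (hφ s hs).continuousAt.continuousWithinAt)
    (fun s hs => (hφ s (interior_subset hs)).hasDerivWithinAt)
    (fun s hs => hφpos s (interior_subset hs))

lemma mul_sub_le_sub_of_monotoneOn_deriv (hφ : ∀ s ∈ Ioi a, HasDerivAt φ (φ' s) s)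
    (hφconv : MonotoneOn φ' (Ioi a)) {lam μ : ℝ} (hlam : a < lam) (hμ : lam ≤ μ) :
    φ' lam * (μ - lam) ≤ φ μ - φ lam := by
  have hsub : Ici lam ⊆ Ioi a := Ici_subset_Ioi.2 hlam
  refine (convex_Ici lam).mul_sub_le_image_sub_of_le_deriv
    (fun s hs => (hφ s (hsub hs)).continuousAt.continuousWithinAt)
    (fun s hs => (hφ s (hsub (interior_subset hs))).differentiableAt.differentiableWithinAt)
    (fun s hs => ?_) lam self_mem_Ici μ hμ hμ
  rw [interior_Ici] at hs
  rw [(hφ s (hsub (Ioi_subset_Ici_self hs))).deriv]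
  exact hφconv hlam (hsub (Ioi_subset_Ici_self hs)) (le_of_lt hs)

lemma monotoneOn_sub_comp_add (hφ : ∀ s ∈ Ioi a, HasDerivAt φ (φ' s) s)
    (hφconv : MonotoneOn φ' (Ioi a)) {t : ℝ} (ht : 0 ≤ t) :
    MonotoneOn (fun s => φ (s + t) - φ s) (Ioi a) := by
  have hshift : ∀ s ∈ Ioi a, s + t ∈ Ioi a := fun s hs => lt_add_of_lt_of_nonneg hs ht
  have hderiv : ∀ s ∈ Ioi a, HasDerivAt (fun s => φ (s + t) - φ s) (φ' (s + t) - φ' s) s :=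
    fun s hs => ((hφ _ (hshift s hs)).comp_add_const s t).sub (hφ s hs)
  refine monotoneOn_of_hasDerivWithinAt_nonneg (convex_Ioi a)
    (fun s hs => (hderiv s hs).continuousAt.continuousWithinAt)
    (fun s hs => (hderiv s (interior_subset hs)).hasDerivWithinAt) (fun s hs => ?_)
  rw [interior_Ioi] at hs
  exact sub_nonneg.2 (hφconv hs (hshift s hs) (le_add_of_nonneg_right ht))

end Potential

def inverseSlope (φ : ℝ → ℝ) (lam μ : ℝ) : ℝ := (firstIntegralSlope (φ μ - φ lam))⁻¹

def timeToHeight (φ : ℝ → ℝ) (lam y : ℝ) : ℝ := ∫ μ in lam..y, inverseSlope φ lam μ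

def halfLength (φ : ℝ → ℝ) (lam : ℝ) : ℝ := ∫ μ in Ioi lam, inverseSlope φ lam μ

section InverseSlope

variable {a lam : ℝ} {φ φ' : ℝ → ℝ}

lemma inverseSlope_nonneg (φ : ℝ → ℝ) (lam μ : ℝ) : 0 ≤ inverseSlope φ lam μ :=
  inv_nonneg.2 (firstIntegralSlope_nonneg _)

lemma inverseSlope_pos (hφ : ∀ s ∈ Ioi a, HasDerivAt φ (φ' s) s)
    (hφpos : ∀ s ∈ Ioi a, 0 < φ' s) (hlam : a < lam) {μ : ℝ} (hμ : lam < μ) :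
    0 < inverseSlope φ lam μ :=
  inv_pos.2 <| firstIntegralSlope_pos <| sub_pos.2 <|
    strictMonoOn_of_hasDerivAt_pos_Ioi hφ hφpos hlam (hlam.trans hμ) hμ

lemma continuousOn_inverseSlope (hφ : ∀ s ∈ Ioi a, HasDerivAt φ (φ' s) s)
    (hφpos : ∀ s ∈ Ioi a, 0 < φ' s) (hlam : a < lam) :
    ContinuousOn (inverseSlope φ lam) (Ioi lam) := by
  refine fun μ hμ => ContinuousAt.continuousWithinAt ?_
  have hφμ : ContinuousAt φ μ := (hφ μ (hlam.trans hμ)).continuousAt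
  exact ((continuous_firstIntegralSlope.continuousAt.comp (hφμ.sub continuousAt_const)).inv₀
    (inv_pos.1 (inverseSlope_pos hφ hφpos hlam hμ)).ne')

lemma integrableOn_inverseSlope_Ioc (hφ : ∀ s ∈ Ioi a, HasDerivAt φ (φ' s) s)
    (hφpos : ∀ s ∈ Ioi a, 0 < φ' s) (hφconv : MonotoneOn φ' (Ioi a)) (hlam : a < lam)
    (b : ℝ) : IntegrableOn (inverseSlope φ lam) (Ioc lam b) := by
  set c := φ' lam
  have hc : 0 < c := hφpos lam hlam
  have hdom : IntegrableOn (fun μ => (√(2 * c))⁻¹ * (μ - lam) ^ (-(1 / 2) : ℝ)) (Ioc lam b) := by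
    refine Integrable.const_mul ?_ _
    have h := (intervalIntegral.intervalIntegrable_rpow' (a := 0) (b := b - lam)
      (r := -(1 / 2)) (by norm_num)).comp_sub_right lam
    simp only [zero_add, sub_add_cancel] at h
    exact h.1
  refine hdom.mono' (((continuousOn_inverseSlope hφ hφpos hlam).mono
    Ioc_subset_Ioi_self).aestronglyMeasurable measurableSet_Ioc) ?_
  refine (ae_restrict_iff' measurableSet_Ioc).2 (Eventually.of_forall fun μ hμ => ?_)
  have hμ' : 0 < μ - lam := sub_pos.2 hμ.1
  have htangent : c * (μ - lam) ≤ φ μ - φ lam :=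
    mul_sub_le_sub_of_monotoneOn_deriv hφ hφconv hlam hμ.1.le
  rw [norm_of_nonneg (inverseSlope_nonneg _ _ _), inverseSlope]
  calc (firstIntegralSlope (φ μ - φ lam))⁻¹ ≤ (√(2 * (c * (μ - lam))))⁻¹ := by
        refine inv_anti₀ (by positivity) ?_
        exact (sqrt_le_sqrt (by linarith)).trans (sqrt_two_mul_le_firstIntegralSlope _)
    _ = (√(2 * c))⁻¹ * (μ - lam) ^ (-(1 / 2) : ℝ) := by
        rw [← mul_assoc, sqrt_mul (by positivity), mul_inv, sqrt_eq_rpow (μ - lam), rpow_neg hμ'.le]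

lemma integrableOn_inverseSlope_Ioi_of_one_le (hφ : ∀ s ∈ Ioi a, HasDerivAt φ (φ' s) s)
    (hφpos : ∀ s ∈ Ioi a, 0 < φ' s) (hint : IntegrableOn (fun t => exp (-φ t)) (Ioi a))
    (hlam : a < lam) {b : ℝ} (hb : lam ≤ b) (hgap : ∀ μ ∈ Ioi b, 1 ≤ φ μ - φ lam) :
    IntegrableOn (inverseSlope φ lam) (Ioi b) := by
  have hsub : Ioi b ⊆ Ioi lam := Ioi_subset_Ioi hb
  have hdom : IntegrableOn (fun μ => 2 * exp (φ lam) * exp (-φ μ)) (Ioi b) :=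
    (hint.mono_set (Ioi_subset_Ioi (hlam.le.trans hb))).const_mul _
  refine hdom.mono' (((continuousOn_inverseSlope hφ hφpos hlam).mono
    hsub).aestronglyMeasurable measurableSet_Ioi) ?_
  refine (ae_restrict_iff' measurableSet_Ioi).2 (Eventually.of_forall fun μ hμ => ?_)
  rw [norm_of_nonneg (inverseSlope_nonneg _ _ _), inverseSlope]
  calc (firstIntegralSlope (φ μ - φ lam))⁻¹ ≤ (exp (φ μ - φ lam) / 2)⁻¹ :=
        inv_anti₀ (by positivity) (exp_div_two_le_firstIntegralSlope (hgap μ hμ))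
    _ = 2 * exp (φ lam) * exp (-φ μ) := by
        rw [inv_div, exp_sub, div_div_eq_mul_div, exp_neg]
        ring

lemma integrableOn_inverseSlope (hφ : ∀ s ∈ Ioi a, HasDerivAt φ (φ' s) s)
    (hφpos : ∀ s ∈ Ioi a, 0 < φ' s) (hφconv : MonotoneOn φ' (Ioi a))
    (htop : Tendsto φ atTop atTop) (hint : IntegrableOn (fun t => exp (-φ t)) (Ioi a))
    (hlam : a < lam) : IntegrableOn (inverseSlope φ lam) (Ioi lam) := by
  obtain ⟨b, hb⟩ := (htop.eventually_ge_atTop (φ lam + 1)).exists_forall_of_atTop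
  have hgap : ∀ μ ∈ Ioi (max b lam), 1 ≤ φ μ - φ lam := fun μ hμ => by
    linarith [hb μ ((le_max_left b lam).trans (le_of_lt hμ))]
  rw [← Ioc_union_Ioi_eq_Ioi (le_max_right b lam)]
  exact (integrableOn_inverseSlope_Ioc hφ hφpos hφconv hlam _).union
    (integrableOn_inverseSlope_Ioi_of_one_le hφ hφpos hint hlam (le_max_right b lam) hgap)

end InverseSlope

section TimeToHeight

variable {a lam : ℝ} {φ φ' : ℝ → ℝ}

@[simp] lemma timeToHeight_self (φ : ℝ → ℝ) (lam : ℝ) : timeToHeight φ lam lam = 0 :=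
  intervalIntegral.integral_same

lemma halfLength_nonneg (φ : ℝ → ℝ) (lam : ℝ) : 0 ≤ halfLength φ lam :=
  setIntegral_nonneg measurableSet_Ioi fun μ _ => inverseSlope_nonneg φ lam μ

lemma hasDerivAt_timeToHeight (hφ : ∀ s ∈ Ioi a, HasDerivAt φ (φ' s) s)
    (hφpos : ∀ s ∈ Ioi a, 0 < φ' s) (hlam : a < lam)
    (hin : IntegrableOn (inverseSlope φ lam) (Ioi lam)) {y : ℝ} (hy : lam < y) :
    HasDerivAt (timeToHeight φ lam) (inverseSlope φ lam y) y := by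
  have hcont := continuousOn_inverseSlope hφ hφpos hlam
  refine intervalIntegral.integral_hasDerivAt_right ?_
    (hcont.stronglyMeasurableAtFilter isOpen_Ioi y hy) (hcont.continuousAt (Ioi_mem_nhds hy))
  rw [intervalIntegrable_iff_integrableOn_Ioc_of_le hy.le]
  exact hin.mono_set Ioc_subset_Ioi_self

lemma continuousOn_timeToHeight (hin : IntegrableOn (inverseSlope φ lam) (Ioi lam)) :
    ContinuousOn (timeToHeight φ lam) (Ici lam) := by
  have hprim : Continuous fun y => ∫ μ in lam..y, (Ioi lam).indicator (inverseSlope φ lam) μ :=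
    intervalIntegral.continuous_primitive
      (fun _ _ => (hin.integrable_indicator measurableSet_Ioi).intervalIntegrable) lam
  refine hprim.continuousOn.congr fun y hy => intervalIntegral.integral_congr_ae ?_
  refine Eventually.of_forall fun μ hμ => (indicator_of_mem ?_ _).symm
  rw [uIoc_of_le hy] at hμ
  exact hμ.1

lemma strictMonoOn_timeToHeight (hφ : ∀ s ∈ Ioi a, HasDerivAt φ (φ' s) s)
    (hφpos : ∀ s ∈ Ioi a, 0 < φ' s) (hlam : a < lam)
    (hin : IntegrableOn (inverseSlope φ lam) (Ioi lam)) :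
    StrictMonoOn (timeToHeight φ lam) (Ici lam) := by
  refine strictMonoOn_of_hasDerivWithinAt_pos (f' := inverseSlope φ lam) (convex_Ici lam)
    (continuousOn_timeToHeight hin) (fun y hy => ?_) (fun y hy => ?_) <;>
    rw [interior_Ici] at hy
  · exact (hasDerivAt_timeToHeight hφ hφpos hlam hin hy).hasDerivWithinAt
  · exact inverseSlope_pos hφ hφpos hlam hy

lemma timeToHeight_le_halfLength (hin : IntegrableOn (inverseSlope φ lam) (Ioi lam))
    {y : ℝ} (hy : lam ≤ y) : timeToHeight φ lam y ≤ halfLength φ lam := by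
  rw [timeToHeight, intervalIntegral.integral_of_le hy, halfLength]
  exact setIntegral_mono_set hin (Eventually.of_forall (inverseSlope_nonneg φ lam))
    Ioc_subset_Ioi_self.eventuallyLE

lemma bijOn_timeToHeight (hφ : ∀ s ∈ Ioi a, HasDerivAt φ (φ' s) s)
    (hφpos : ∀ s ∈ Ioi a, 0 < φ' s) (hlam : a < lam)
    (hin : IntegrableOn (inverseSlope φ lam) (Ioi lam)) :
    BijOn (timeToHeight φ lam) (Ici lam) (Ico 0 (halfLength φ lam)) := by
  have hmono := strictMonoOn_timeToHeight hφ hφpos hlam hin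
  refine ⟨fun y hy => ⟨?_, ?_⟩, hmono.injOn, fun x hx => ?_⟩
  · simpa using hmono.monotoneOn self_mem_Ici hy hy
  · have hy1 : lam ≤ y + 1 := le_add_of_le_of_nonneg hy zero_le_one
    exact (hmono hy hy1 (lt_add_one y)).trans_le (timeToHeight_le_halfLength hin hy1)
  · obtain ⟨y₀, hy₀, hlam_y₀⟩ := ((intervalIntegral_tendsto_integral_Ioi lam hin
      tendsto_id).eventually_const_lt hx.2 |>.and (eventually_ge_atTop lam)).exists
    obtain ⟨y, hy, rfl⟩ := intermediate_value_Icc hlam_y₀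
      ((continuousOn_timeToHeight hin).mono Icc_subset_Ici_self)
      ⟨by simpa using hx.1, hy₀.le⟩
    exact ⟨y, hy.1, rfl⟩

end TimeToHeight

structure IsSolution (a : ℝ) (φ' : ℝ → ℝ) (lam Λ : ℝ) (u u' : ℝ → ℝ) : Prop where
  hasDerivAt : ∀ x ∈ Ioo (-Λ) Λ, HasDerivAt u (u' x) x
  hasDerivAt_deriv : ∀ x ∈ Ioo (-Λ) Λ, HasDerivAt u' (φ' (u x) * (1 + u' x ^ 2)) x
  mem : ∀ x ∈ Ioo (-Λ) Λ, u x ∈ Ioi a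
  apply_zero : u 0 = lam
  deriv_zero : u' 0 = 0

namespace IsSolution

variable {a lam Λ : ℝ} {φ φ' u u' : ℝ → ℝ}

lemma deriv_pos (hφpos : ∀ s ∈ Ioi a, 0 < φ' s) (hu : IsSolution a φ' lam Λ u u') {x : ℝ}
    (hx : x ∈ Ioo 0 Λ) : 0 < u' x := by
  have hmono : StrictMonoOn u' (Ioo (-Λ) Λ) :=
    strictMonoOn_of_hasDerivWithinAt_pos (convex_Ioo _ _)
      (fun y hy => (hu.hasDerivAt_deriv y hy).continuousAt.continuousWithinAt)
      (fun y hy => (hu.hasDerivAt_deriv y (interior_subset hy)).hasDerivWithinAt)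
      (fun y hy => by
        have := hφpos _ (hu.mem y (interior_subset hy))
        positivity)
  simpa [hu.deriv_zero] using
    hmono ⟨neg_neg_of_pos (hx.1.trans hx.2), hx.1.trans hx.2⟩ ⟨by linarith [hx.1, hx.2], hx.2⟩ hx.1

lemma strictMonoOn (hφpos : ∀ s ∈ Ioi a, 0 < φ' s) (hu : IsSolution a φ' lam Λ u u') :
    StrictMonoOn u (Ico 0 Λ) := by
  have hsub : Ico 0 Λ ⊆ Ioo (-Λ) Λ := fun x hx => ⟨by linarith [hx.1, hx.2], hx.2⟩
  refine strictMonoOn_of_hasDerivWithinAt_pos (f' := u') (convex_Ico 0 Λ)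
    (fun x hx => (hu.hasDerivAt x (hsub hx)).continuousAt.continuousWithinAt)
    (fun x hx => ?_) (fun x hx => ?_) <;> rw [interior_Ico] at hx
  · exact (hu.hasDerivAt x (hsub (Ioo_subset_Ico_self hx))).hasDerivWithinAt
  · exact hu.deriv_pos hφpos hx

lemma one_add_sq_deriv (hφ : ∀ s ∈ Ioi a, HasDerivAt φ (φ' s) s)
    (hu : IsSolution a φ' lam Λ u u') {x : ℝ} (hx : x ∈ Ioo (-Λ) Λ) :
    1 + u' x ^ 2 = exp (2 * (φ (u x) - φ lam)) := by
  set E : ℝ → ℝ := fun y => (1 + u' y ^ 2) * exp (-(2 * φ (u y)))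
  have hE : ∀ y ∈ Ioo (-Λ) Λ, HasDerivAt E 0 y := fun y hy => by
    have hsq : HasDerivAt (fun y => 1 + u' y ^ 2)
        (2 * u' y * (φ' (u y) * (1 + u' y ^ 2))) y := by
      simpa using ((hu.hasDerivAt_deriv y hy).pow 2).const_add 1
    have hexp : HasDerivAt (fun y => exp (-(2 * φ (u y))))
        (exp (-(2 * φ (u y))) * -(2 * (φ' (u y) * u' y))) y :=
      (((hφ _ (hu.mem y hy)).comp y (hu.hasDerivAt y hy)).const_mul 2).neg.exp
    exact (hsq.mul hexp).congr_deriv (by ring)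
  have h0 : (0 : ℝ) ∈ Ioo (-Λ) Λ := ⟨by linarith [hx.1, hx.2], by linarith [hx.1, hx.2]⟩
  have hconst : E x = E 0 := isOpen_Ioo.is_const_of_deriv_eq_zero isPreconnected_Ioo
    (fun y hy => (hE y hy).differentiableAt.differentiableWithinAt)
    (fun y hy => (hE y hy).deriv) hx h0
  simp only [E, hu.deriv_zero, hu.apply_zero, exp_neg] at hconst
  rw [mul_sub, exp_sub, eq_div_iff (exp_pos _).ne']
  field_simp at hconst
  simpa using hconst

lemma deriv_eq_firstIntegralSlope (hφ : ∀ s ∈ Ioi a, HasDerivAt φ (φ' s) s)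
    (hφpos : ∀ s ∈ Ioi a, 0 < φ' s) (hu : IsSolution a φ' lam Λ u u') {x : ℝ}
    (hx : x ∈ Ico 0 Λ) : u' x = firstIntegralSlope (φ (u x) - φ lam) := by
  have hnonneg : 0 ≤ u' x := by
    rcases hx.1.eq_or_lt with rfl | hx0
    · exact hu.deriv_zero.ge
    · exact (hu.deriv_pos hφpos ⟨hx0, hx.2⟩).le
  rw [firstIntegralSlope, ← hu.one_add_sq_deriv hφ ⟨by linarith [hx.1, hx.2], hx.2⟩,
    add_sub_cancel_left, sqrt_sq hnonneg]

lemma timeToHeight_eq (hφ : ∀ s ∈ Ioi a, HasDerivAt φ (φ' s) s)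
    (hφpos : ∀ s ∈ Ioi a, 0 < φ' s) (hin : IntegrableOn (inverseSlope φ lam) (Ioi lam))
    (hu : IsSolution a φ' lam Λ u u') {x : ℝ} (hx : x ∈ Ico 0 Λ) :
    timeToHeight φ lam (u x) = x := by
  rcases hx.1.eq_or_lt with rfl | hx0
  · simp [hu.apply_zero]
  have hsub : Icc 0 x ⊆ Ico 0 Λ := Icc_subset_Ico_right hx.2
  have hsub' : Ico 0 Λ ⊆ Ioo (-Λ) Λ := fun y hy => ⟨by linarith [hy.1, hy.2], hy.2⟩
  have hu0 : u 0 = lam := hu.apply_zero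
  have hlam : a < lam := hu0 ▸ hu.mem 0 (hsub' ⟨le_rfl, hx0.trans hx.2⟩)
  have hmono := hu.strictMonoOn hφpos
  set G : ℝ → ℝ := fun y => timeToHeight φ lam (u y) - y
  have hcont : ContinuousOn G (Icc 0 x) := by
    refine ((continuousOn_timeToHeight hin).comp (fun y hy => ?_) fun y hy => ?_).sub
      continuousOn_id
    · exact (hu.hasDerivAt y (hsub' (hsub hy))).continuousAt.continuousWithinAt
    · exact hu0 ▸ hmono.monotoneOn ⟨le_rfl, hx0.trans hx.2⟩ (hsub hy) hy.1
  have hderiv : ∀ y ∈ Ioo 0 x, HasDerivAt G 0 y := fun y hy => by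
    have hy' : y ∈ Ico 0 Λ := hsub (Ioo_subset_Icc_self hy)
    have hlt : lam < u y := hu0 ▸ hmono ⟨le_rfl, hx0.trans hx.2⟩ hy' hy.1
    have hF := (hasDerivAt_timeToHeight hφ hφpos hlam hin hlt).comp y
      (hu.hasDerivAt y (hsub' hy'))
    refine (hF.sub (hasDerivAt_id y)).congr_deriv ?_
    rw [hu.deriv_eq_firstIntegralSlope hφ hφpos hy', inverseSlope,
      inv_mul_cancel₀ (inv_pos.1 (inverseSlope_pos hφ hφpos hlam hlt)).ne', sub_self]
  obtain ⟨c, -, hc⟩ := exists_hasDerivAt_eq_slope G (fun _ => 0) hx0 hcont hderiv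
  simp only [G, hu0, timeToHeight_self, sub_zero] at hc
  linarith [(div_eq_zero_iff.1 hc.symm).resolve_right hx0.ne']

lemma le_halfLength (hφ : ∀ s ∈ Ioi a, HasDerivAt φ (φ' s) s)
    (hφpos : ∀ s ∈ Ioi a, 0 < φ' s) (hφconv : MonotoneOn φ' (Ioi a))
    (htop : Tendsto φ atTop atTop) (hint : IntegrableOn (fun t => exp (-φ t)) (Ioi a))
    (hu : IsSolution a φ' lam Λ u u') : Λ ≤ halfLength φ lam := by
  refine le_of_forall_lt_imp_le_of_dense fun x hx => ?_
  rcases lt_or_ge x 0 with hx0 | hx0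
  · exact hx0.le.trans (halfLength_nonneg φ lam)
  have hlam : a < lam := hu.apply_zero ▸ hu.mem 0 ⟨by linarith, by linarith⟩
  have hin := integrableOn_inverseSlope hφ hφpos hφconv htop hint hlam
  have hge : lam ≤ u x := hu.apply_zero ▸
    (hu.strictMonoOn hφpos).monotoneOn ⟨le_rfl, hx0.trans_lt hx⟩ ⟨hx0, hx⟩ hx0
  calc x = timeToHeight φ lam (u x) := (hu.timeToHeight_eq hφ hφpos hin ⟨hx0, hx⟩).symm
    _ ≤ halfLength φ lam := timeToHeight_le_halfLength hin hge

end IsSolution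

lemma antitoneOn_halfLength {a : ℝ} {φ φ' : ℝ → ℝ} (hφ : ∀ s ∈ Ioi a, HasDerivAt φ (φ' s) s)
    (hφpos : ∀ s ∈ Ioi a, 0 < φ' s) (hφconv : MonotoneOn φ' (Ioi a))
    (htop : Tendsto φ atTop atTop) (hint : IntegrableOn (fun t => exp (-φ t)) (Ioi a)) :
    AntitoneOn (halfLength φ) (Ioi a) := by
  intro lam₁ h₁ lam₂ h₂ h12
  set d := lam₂ - lam₁
  have hshift : MeasurePreserving (· + d) volume volume := measurePreserving_add_right volume d
  have hemb : MeasurableEmbedding (· + d) := (Homeomorph.addRight d).measurableEmbedding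
  have hpre : (· + d) ⁻¹' Ioi lam₂ = Ioi lam₁ := by simp [d]
  have hcov : halfLength φ lam₂ = ∫ μ in Ioi lam₁, inverseSlope φ lam₂ (μ + d) := by
    rw [halfLength, ← hshift.setIntegral_preimage_emb hemb, hpre]
  have hint₂ : IntegrableOn (fun μ => inverseSlope φ lam₂ (μ + d)) (Ioi lam₁) := by
    rw [← hpre]
    exact hshift.integrableOn_comp_preimage hemb |>.2
      (integrableOn_inverseSlope hφ hφpos hφconv htop hint h₂)
  rw [hcov, halfLength]
  refine setIntegral_mono_on hint₂ (integrableOn_inverseSlope hφ hφpos hφconv htop hint h₁)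
    measurableSet_Ioi fun μ hμ => ?_
  have hgap : φ μ - φ lam₁ ≤ φ (μ + d) - φ lam₂ := by
    have := monotoneOn_sub_comp_add hφ hφconv (sub_nonneg.2 h12) h₁
      (mem_Ioi.2 (mem_Ioi.1 h₁ |>.trans hμ)) (le_of_lt hμ)
    simp only [add_sub_cancel] at this
    linarith
  exact inv_anti₀ (inv_pos.1 (inverseSlope_pos hφ hφpos h₁ hμ))
    (monotone_firstIntegralSlope hgap)

section Extension

variable {f f' : ℝ → ℝ} {L : ℝ}

lemma hasDerivAt_of_tendsto_nhdsNE {x c : ℝ} (hf : ∀ᶠ y in 𝓝[≠] x, HasDerivAt f (f' y) y)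
    (hcont : ContinuousAt f x) (hf' : Tendsto f' (𝓝[≠] x) (𝓝 c)) : HasDerivAt f c x := by
  set s := {y | HasDerivAt f (f' y) y}
  have hdiff : DifferentiableOn ℝ f s := fun y hy => hy.differentiableAt.differentiableWithinAt
  have hGT : s ∈ 𝓝[>] x := nhdsWithin_mono _ (fun y hy => ne_of_gt hy) hf
  have hLT : s ∈ 𝓝[<] x := nhdsWithin_mono _ (fun y hy => ne_of_lt hy) hf
  have hright : HasDerivWithinAt f c (Ici x) x :=
    hasDerivWithinAt_Ici_of_tendsto_deriv hdiff hcont.continuousWithinAt hGT <|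
      (hf'.mono_left (nhdsWithin_mono _ fun y hy => ne_of_gt hy)).congr' <|
        eventually_of_mem hGT fun y hy => hy.deriv.symm
  have hleft : HasDerivWithinAt f c (Iic x) x :=
    hasDerivWithinAt_Iic_of_tendsto_deriv hdiff hcont.continuousWithinAt hLT <|
      (hf'.mono_left (nhdsWithin_mono _ fun y hy => ne_of_lt hy)).congr' <|
        eventually_of_mem hLT fun y hy => hy.deriv.symm
  simpa using hleft.union hright

lemma eventually_nhds_sign_eq {x : ℝ} (hx : x ≠ 0) :
    ∀ᶠ y in 𝓝 x, SignType.sign y = SignType.sign x :=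
  continuousAt_sign_of_ne_zero hx (isOpen_discrete {SignType.sign x} |>.mem_nhds rfl)

lemma abs_sign_le_one (x : ℝ) : |(SignType.sign x : ℝ)| ≤ 1 := by
  rcases lt_trichotomy x 0 with h | rfl | h <;> simp [*]

lemma hasDerivAt_comp_abs (hf : ∀ y ∈ Ioo 0 L, HasDerivAt f (f' y) y)
    (hf0 : Tendsto f (𝓝[>] 0) (𝓝 (f 0))) (hf'0 : Tendsto f' (𝓝[>] 0) (𝓝 0)) {x : ℝ}
    (hx : x ∈ Ioo (-L) L) : HasDerivAt (fun y => f |y|) (SignType.sign x * f' |x|) x := by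
  have hne : ∀ y ∈ Ioo (-L) L, y ≠ 0 →
      HasDerivAt (fun y => f |y|) (SignType.sign y * f' |y|) y := fun y hy hy0 => by
    rw [mul_comm]
    exact (hf |y| ⟨abs_pos.2 hy0, abs_lt.2 hy⟩).comp y (hasDerivAt_abs hy0)
  rcases eq_or_ne x 0 with rfl | hx0
  · rw [_root_.sign_zero, SignType.coe_zero, zero_mul]
    refine hasDerivAt_of_tendsto_nhdsNE ?_ ?_ <|
      isBoundedUnder_le_mul_tendsto_zero (isBoundedUnder_of ⟨1, abs_sign_le_one⟩)
        (hf'0.comp tendsto_abs_nhdsNE_zero)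
    · filter_upwards [nhdsWithin_le_nhds (Ioo_mem_nhds hx.1 hx.2), self_mem_nhdsWithin]
        with y hy hy0 using hne y hy hy0
    · rw [← continuousWithinAt_compl_self, ContinuousWithinAt, abs_zero]
      exact hf0.comp tendsto_abs_nhdsNE_zero
  · exact hne x hx hx0

lemma hasDerivAt_sign_mul_comp_abs (hf : ∀ y ∈ Ioo 0 L, HasDerivAt f (f' y) y)
    (hf0 : Tendsto f (𝓝[>] 0) (𝓝 0)) (hf'0 : Tendsto f' (𝓝[>] 0) (𝓝 (f' 0))) {x : ℝ}
    (hx : x ∈ Ioo (-L) L) : HasDerivAt (fun y => SignType.sign y * f |y|) (f' |x|) x := by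
  have hne : ∀ y ∈ Ioo (-L) L, y ≠ 0 →
      HasDerivAt (fun y => SignType.sign y * f |y|) (f' |y|) y := fun y hy hy0 => by
    have hsq : (SignType.sign y : ℝ) * SignType.sign y = 1 := by
      rcases hy0.lt_or_gt with h | h <;> simp [h]
    have h := ((hf |y| ⟨abs_pos.2 hy0, abs_lt.2 hy⟩).comp y (hasDerivAt_abs hy0)).const_mul
      (SignType.sign y : ℝ)
    rw [mul_left_comm, hsq, mul_one] at h
    refine h.congr_of_eventuallyEq ?_
    filter_upwards [eventually_nhds_sign_eq hy0] with z hz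
    simp [hz]
  rcases eq_or_ne x 0 with rfl | hx0
  · rw [abs_zero]
    refine hasDerivAt_of_tendsto_nhdsNE (f' := fun y => f' |y|) ?_ ?_
      (hf'0.comp tendsto_abs_nhdsNE_zero)
    · filter_upwards [nhdsWithin_le_nhds (Ioo_mem_nhds hx.1 hx.2), self_mem_nhdsWithin]
        with y hy hy0 using hne y hy hy0
    · rw [← continuousWithinAt_compl_self, ContinuousWithinAt, _root_.sign_zero,
        SignType.coe_zero, zero_mul]
      exact isBoundedUnder_le_mul_tendsto_zero (isBoundedUnder_of ⟨1, abs_sign_le_one⟩)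
        (hf0.comp tendsto_abs_nhdsNE_zero)
  · exact hne x hx hx0

end Extension

def heightAtTime (φ : ℝ → ℝ) (lam : ℝ) : ℝ → ℝ := Function.invFunOn (timeToHeight φ lam) (Ici lam)

section HeightAtTime

variable {a lam : ℝ} {φ φ' : ℝ → ℝ}

lemma invOn_heightAtTime (hφ : ∀ s ∈ Ioi a, HasDerivAt φ (φ' s) s)
    (hφpos : ∀ s ∈ Ioi a, 0 < φ' s) (hlam : a < lam)
    (hin : IntegrableOn (inverseSlope φ lam) (Ioi lam)) :
    InvOn (heightAtTime φ lam) (timeToHeight φ lam) (Ici lam) (Ico 0 (halfLength φ lam)) :=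
  (bijOn_timeToHeight hφ hφpos hlam hin).invOn_invFunOn

lemma heightAtTime_zero (hφ : ∀ s ∈ Ioi a, HasDerivAt φ (φ' s) s)
    (hφpos : ∀ s ∈ Ioi a, 0 < φ' s) (hlam : a < lam)
    (hin : IntegrableOn (inverseSlope φ lam) (Ioi lam)) : heightAtTime φ lam 0 = lam := by
  simpa using (invOn_heightAtTime hφ hφpos hlam hin).1 (self_mem_Ici : lam ∈ Ici lam)

lemma bijOn_heightAtTime (hφ : ∀ s ∈ Ioi a, HasDerivAt φ (φ' s) s)
    (hφpos : ∀ s ∈ Ioi a, 0 < φ' s) (hlam : a < lam)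
    (hin : IntegrableOn (inverseSlope φ lam) (Ioi lam)) :
    BijOn (heightAtTime φ lam) (Ico 0 (halfLength φ lam)) (Ici lam) :=
  (bijOn_timeToHeight hφ hφpos hlam hin).symm (invOn_heightAtTime hφ hφpos hlam hin).symm

lemma strictMonoOn_heightAtTime (hφ : ∀ s ∈ Ioi a, HasDerivAt φ (φ' s) s)
    (hφpos : ∀ s ∈ Ioi a, 0 < φ' s) (hlam : a < lam)
    (hin : IntegrableOn (inverseSlope φ lam) (Ioi lam)) :
    StrictMonoOn (heightAtTime φ lam) (Ico 0 (halfLength φ lam)) := fun x hx y hy hxy => by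
  have hbij := bijOn_heightAtTime hφ hφpos hlam hin
  have hinv := (invOn_heightAtTime hφ hφpos hlam hin).2
  refine ((strictMonoOn_timeToHeight hφ hφpos hlam hin).lt_iff_lt
    (hbij.mapsTo hx) (hbij.mapsTo hy)).1 ?_
  rwa [hinv hx, hinv hy]

lemma lt_heightAtTime (hφ : ∀ s ∈ Ioi a, HasDerivAt φ (φ' s) s)
    (hφpos : ∀ s ∈ Ioi a, 0 < φ' s) (hlam : a < lam)
    (hin : IntegrableOn (inverseSlope φ lam) (Ioi lam)) {x : ℝ}
    (hx : x ∈ Ioo 0 (halfLength φ lam)) : lam < heightAtTime φ lam x := by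
  simpa [heightAtTime_zero hφ hφpos hlam hin] using strictMonoOn_heightAtTime hφ hφpos hlam hin
    ⟨le_rfl, hx.1.trans hx.2⟩ (Ioo_subset_Ico_self hx) hx.1

lemma tendsto_heightAtTime_nhdsGT_zero (hφ : ∀ s ∈ Ioi a, HasDerivAt φ (φ' s) s)
    (hφpos : ∀ s ∈ Ioi a, 0 < φ' s) (hlam : a < lam)
    (hin : IntegrableOn (inverseSlope φ lam) (Ioi lam)) (hL : 0 < halfLength φ lam) :
    Tendsto (heightAtTime φ lam) (𝓝[>] 0) (𝓝 lam) := by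
  have h := continuousWithinAt_right_of_monotoneOn_of_image_mem_nhdsWithin
    (strictMonoOn_heightAtTime hφ hφpos hlam hin).monotoneOn (Ico_mem_nhdsGE hL)
  rw [(bijOn_heightAtTime hφ hφpos hlam hin).image_eq, heightAtTime_zero hφ hφpos hlam hin] at h
  simpa [heightAtTime_zero hφ hφpos hlam hin] using
    (h self_mem_nhdsWithin).tendsto.mono_left (nhdsWithin_mono _ Ioi_subset_Ici_self)

lemma hasDerivAt_heightAtTime (hφ : ∀ s ∈ Ioi a, HasDerivAt φ (φ' s) s)
    (hφpos : ∀ s ∈ Ioi a, 0 < φ' s) (hlam : a < lam)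
    (hin : IntegrableOn (inverseSlope φ lam) (Ioi lam)) {x : ℝ}
    (hx : x ∈ Ioo 0 (halfLength φ lam)) :
    HasDerivAt (heightAtTime φ lam) (firstIntegralSlope (φ (heightAtTime φ lam x) - φ lam)) x := by
  have hlt := lt_heightAtTime hφ hφpos hlam hin hx
  have hcont : ContinuousAt (heightAtTime φ lam) x := by
    refine continuousAt_of_monotoneOn_of_image_mem_nhds
      (strictMonoOn_heightAtTime hφ hφpos hlam hin).monotoneOn (Ico_mem_nhds hx.1 hx.2) ?_
    rw [(bijOn_heightAtTime hφ hφpos hlam hin).image_eq]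
    exact Ici_mem_nhds hlt
  have hinv : ∀ᶠ y in 𝓝 x, timeToHeight φ lam (heightAtTime φ lam y) = y :=
    eventually_of_mem (Ioo_mem_nhds hx.1 hx.2) fun y hy =>
      (invOn_heightAtTime hφ hφpos hlam hin).2 (Ioo_subset_Ico_self hy)
  simpa [inverseSlope] using HasDerivAt.of_local_left_inverse hcont
    (hasDerivAt_timeToHeight hφ hφpos hlam hin hlt) (inverseSlope_pos hφ hφpos hlam hlt).ne' hinv

end HeightAtTime

lemma hasDerivAt_firstIntegralSlope_comp {φ φ' V : ℝ → ℝ} {lam x : ℝ}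
    (hφ : HasDerivAt φ (φ' (V x)) (V x))
    (hV : HasDerivAt V (firstIntegralSlope (φ (V x) - φ lam)) x) (hlt : φ lam < φ (V x)) :
    HasDerivAt (fun y => firstIntegralSlope (φ (V y) - φ lam))
      (φ' (V x) * (1 + firstIntegralSlope (φ (V x) - φ lam) ^ 2)) x := by
  have hr : 0 < φ (V x) - φ lam := sub_pos.2 hlt
  refine ((hasDerivAt_firstIntegralSlope hr).comp x
    ((hφ.comp x hV).sub_const (φ lam))).congr_deriv ?_
  rw [sq_firstIntegralSlope hr.le]
  field_simp [(firstIntegralSlope_pos hr).ne']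
  ring

lemma exists_isSolution {a lam : ℝ} {φ φ' : ℝ → ℝ} (hφ : ∀ s ∈ Ioi a, HasDerivAt φ (φ' s) s)
    (hφc : ContinuousOn φ' (Ioi a)) (hφpos : ∀ s ∈ Ioi a, 0 < φ' s)
    (hφconv : MonotoneOn φ' (Ioi a)) (htop : Tendsto φ atTop atTop)
    (hint : IntegrableOn (fun t => exp (-φ t)) (Ioi a)) (hlam : a < lam) :
    ∃ v v', IsSolution a φ' lam (halfLength φ lam) v v' := by
  rcases (halfLength_nonneg φ lam).eq_or_lt with hL | hL
  · refine ⟨fun _ => lam, fun _ => 0, ⟨?_, ?_, ?_, rfl, rfl⟩⟩ <;>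
      exact fun x hx => absurd (hx.1.trans hx.2) (by rw [← hL]; simp)
  have hin := integrableOn_inverseSlope hφ hφpos hφconv htop hint hlam
  set H := heightAtTime φ lam
  set W := fun x => firstIntegralSlope (φ (H x) - φ lam)
  have hH0 : H 0 = lam := heightAtTime_zero hφ hφpos hlam hin
  have hW0 : W 0 = 0 := by simp [W, hH0]
  have hHlim : Tendsto H (𝓝[>] 0) (𝓝 lam) := tendsto_heightAtTime_nhdsGT_zero hφ hφpos hlam hin hL
  have hWlim : Tendsto W (𝓝[>] 0) (𝓝 0) := by
    have h := (continuous_firstIntegralSlope.tendsto _).comp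
      (((hφ lam hlam).continuousAt.tendsto.comp hHlim).sub_const (φ lam))
    rwa [sub_self, firstIntegralSlope_zero] at h
  have hW'lim : Tendsto (fun x => φ' (H x) * (1 + W x ^ 2)) (𝓝[>] 0)
      (𝓝 (φ' (H 0) * (1 + W 0 ^ 2))) := by
    rw [hH0, hW0]
    exact ((hφc.continuousAt (Ioi_mem_nhds hlam)).tendsto.comp hHlim).mul
      ((hWlim.pow 2).const_add 1)
  have hHderiv : ∀ x ∈ Ioo 0 (halfLength φ lam), HasDerivAt H (W x) x :=
    fun x hx => hasDerivAt_heightAtTime hφ hφpos hlam hin hx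
  have hWderiv : ∀ x ∈ Ioo 0 (halfLength φ lam), HasDerivAt W (φ' (H x) * (1 + W x ^ 2)) x :=
    fun x hx => by
      have hx' := lt_heightAtTime hφ hφpos hlam hin hx
      exact hasDerivAt_firstIntegralSlope_comp (hφ _ (hlam.trans hx')) (hHderiv x hx)
        (strictMonoOn_of_hasDerivAt_pos_Ioi hφ hφpos hlam (hlam.trans hx') hx')
  refine ⟨fun x => H |x|, fun x => SignType.sign x * W |x|,
    ⟨fun x hx => ?_, fun x hx => ?_, fun x hx => ?_, by simp [hH0], by simp⟩⟩
  · exact hasDerivAt_comp_abs hHderiv (hH0 ▸ hHlim) hWlim hx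
  · convert hasDerivAt_sign_mul_comp_abs hWderiv hWlim hW'lim hx using 3
    rcases lt_trichotomy x 0 with h | rfl | h <;> simp [*]
  · exact hlam.trans_le ((bijOn_heightAtTime hφ hφpos hlam hin).mapsTo
      ⟨abs_nonneg x, abs_lt.2 hx⟩)

end

theorem stmt9_general (a lam₁ lam₂ Λ₁ Λ₂ : ℝ) (ha₁ : a < lam₁) (h12 : lam₁ ≤ lam₂)
    (φ φ' u₂ u₂' : ℝ → ℝ)
    (hφ : ∀ s ∈ Ioi a, HasDerivAt φ (φ' s) s)
    (hφc : ContinuousOn φ' (Ioi a))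
    (hφpos : ∀ s ∈ Ioi a, 0 < φ' s)
    (hφconv : MonotoneOn φ' (Ioi a))
    (htop : Tendsto φ atTop atTop)
    (hint : MeasureTheory.IntegrableOn (fun t => Real.exp (-φ t)) (Ioi a))
    (hmax₁ : ∀ Λ' : ℝ, Λ₁ < Λ' →
      ¬ ∃ v v' : ℝ → ℝ,
          (∀ x ∈ Ioo (-Λ') Λ', HasDerivAt v (v' x) x) ∧
          (∀ x ∈ Ioo (-Λ') Λ', HasDerivAt v' (φ' (v x) * (1 + v' x ^ 2)) x) ∧
          (∀ x ∈ Ioo (-Λ') Λ', v x ∈ Ioi a) ∧ v 0 = lam₁ ∧ v' 0 = 0)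
    (hu₂ : ∀ x ∈ Ioo (-Λ₂) Λ₂, HasDerivAt u₂ (u₂' x) x)
    (hode₂ : ∀ x ∈ Ioo (-Λ₂) Λ₂, HasDerivAt u₂' (φ' (u₂ x) * (1 + u₂' x ^ 2)) x)
    (hrange₂ : ∀ x ∈ Ioo (-Λ₂) Λ₂, u₂ x ∈ Ioi a)
    (hu₂0 : u₂ 0 = lam₂) (hu₂'0 : u₂' 0 = 0) :
    Λ₂ ≤ Λ₁ := by
  have hsol₂ : IsSolution a φ' lam₂ Λ₂ u₂ u₂' := ⟨hu₂, hode₂, hrange₂, hu₂0, hu₂'0⟩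
  have hmax : halfLength φ lam₁ ≤ Λ₁ := le_of_not_gt fun h => by
    obtain ⟨v, v', hv⟩ := exists_isSolution hφ hφc hφpos hφconv htop hint ha₁
    exact hmax₁ _ h ⟨v, v', hv.hasDerivAt, hv.hasDerivAt_deriv, hv.mem, hv.apply_zero,
      hv.deriv_zero⟩
  calc Λ₂ ≤ halfLength φ lam₂ := hsol₂.le_halfLength hφ hφpos hφconv htop hint
    _ ≤ halfLength φ lam₁ :=
      antitoneOn_halfLength hφ hφpos hφconv htop hint ha₁ (ha₁.trans_le h12) h12
    _ ≤ Λ₁ := hmax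

/-- Monotonicity of the half-width of the maximal interval: for `φ` C¹,
strictly increasing, convex (`φ'` nondecreasing), unbounded above and with
`e^{−φ}` integrable on `(a,∞)`, if `λ₁ ≤ λ₂` and `u₁, u₂` are the maximal
solutions of `u'' = φ'(u)(1+(u')²)` with `uᵢ 0 = λᵢ`, `uᵢ' 0 = 0` on maximal
intervals `(−Λ₁, Λ₁)` and `(−Λ₂, Λ₂)`, then `Λ₂ ≤ Λ₁`. -/
theorem stmt9 (a lam₁ lam₂ Λ₁ Λ₂ : ℝ) (ha₁ : a < lam₁) (h12 : lam₁ ≤ lam₂)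
    (hΛ₁ : 0 < Λ₁) (hΛ₂ : 0 < Λ₂)
    (φ φ' u₁ u₁' u₂ u₂' : ℝ → ℝ)
    (hφ : ∀ s ∈ Ioi a, HasDerivAt φ (φ' s) s)
    (hφc : ContinuousOn φ' (Ioi a))
    (hφpos : ∀ s ∈ Ioi a, 0 < φ' s)
    (hφconv : MonotoneOn φ' (Ioi a))
    (htop : Tendsto φ atTop atTop)
    (hint : MeasureTheory.IntegrableOn (fun t => Real.exp (-φ t)) (Ioi a))
    (hu₁ : ∀ x ∈ Ioo (-Λ₁) Λ₁, HasDerivAt u₁ (u₁' x) x)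
    (hode₁ : ∀ x ∈ Ioo (-Λ₁) Λ₁, HasDerivAt u₁' (φ' (u₁ x) * (1 + u₁' x ^ 2)) x)
    (hrange₁ : ∀ x ∈ Ioo (-Λ₁) Λ₁, u₁ x ∈ Ioi a)
    (hu₁0 : u₁ 0 = lam₁) (hu₁'0 : u₁' 0 = 0)
    (hmax₁ : ∀ Λ' : ℝ, Λ₁ < Λ' →
      ¬ ∃ v v' : ℝ → ℝ,
          (∀ x ∈ Ioo (-Λ') Λ', HasDerivAt v (v' x) x) ∧
          (∀ x ∈ Ioo (-Λ') Λ', HasDerivAt v' (φ' (v x) * (1 + v' x ^ 2)) x) ∧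
          (∀ x ∈ Ioo (-Λ') Λ', v x ∈ Ioi a) ∧ v 0 = lam₁ ∧ v' 0 = 0)
    (hu₂ : ∀ x ∈ Ioo (-Λ₂) Λ₂, HasDerivAt u₂ (u₂' x) x)
    (hode₂ : ∀ x ∈ Ioo (-Λ₂) Λ₂, HasDerivAt u₂' (φ' (u₂ x) * (1 + u₂' x ^ 2)) x)
    (hrange₂ : ∀ x ∈ Ioo (-Λ₂) Λ₂, u₂ x ∈ Ioi a)
    (hu₂0 : u₂ 0 = lam₂) (hu₂'0 : u₂' 0 = 0)
    (hmax₂ : ∀ Λ' : ℝ, Λ₂ < Λ' →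
      ¬ ∃ v v' : ℝ → ℝ,
          (∀ x ∈ Ioo (-Λ') Λ', HasDerivAt v (v' x) x) ∧
          (∀ x ∈ Ioo (-Λ') Λ', HasDerivAt v' (φ' (v x) * (1 + v' x ^ 2)) x) ∧
          (∀ x ∈ Ioo (-Λ') Λ', v x ∈ Ioi a) ∧ v 0 = lam₂ ∧ v' 0 = 0) :
    Λ₂ ≤ Λ₁ :=
  stmt9_general a lam₁ lam₂ Λ₁ Λ₂ ha₁ h12 φ φ' u₂ u₂' hφ hφc hφpos hφconv htop hint hmax₁ hu₂ hode₂
    hrange₂ hu₂0 hu₂'0
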